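/- If c > 0, then 0 < P(X < μ) < 1 and E[X | X ≥ μ] − E[X | X < μ] ≥ c/2, where the conditional expectation is E[X | A] = E[X·1_A]/P(A). -/

import Mathlib

open MeasureTheory ProbabilityTheory

/-! Let `m = E[X]`, `A = {X < m}` and `d = ∫_A (m - X)`. Since `X - m` has mean zero, also
`d = ∫_{Aᶜ} (X - m)`, so `E|X - m| = 2d`. As `|X - m| ≤ 1`, the variance satisfies
`c = E(X - m)² ≤ E|X - m| = 2d`; hence `d ≥ c/2 > 0`, which forces `0 < P(A) < 1`. The two
conditional means are `m - d/P(A)` and `m + d/P(Aᶜ)`, and their gap `d/P(A) + d/P(Aᶜ)` is at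
least `d`. -/

section

variable {Ω : Type*} [MeasurableSpace Ω] {P : Measure Ω} {X : Ω → ℝ}

lemma setIntegral_sub_const [IsFiniteMeasure P] (hX : Integrable X P) (s : Set Ω) (m : ℝ) :
    ∫ ω in s, (X ω - m) ∂P = ∫ ω in s, X ω ∂P - m * P.real s := by
  rw [integral_sub hX.integrableOn (integrable_const m), setIntegral_const, smul_eq_mul, mul_comm]

lemma setIntegral_div_measureReal_eq_add [IsFiniteMeasure P] (hX : Integrable X P)
    {s : Set Ω} (hs : P s ≠ 0) (m : ℝ) :
    (∫ ω in s, X ω ∂P) / P.real s = m + (∫ ω in s, (X ω - m) ∂P) / P.real s := by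
  have hpos : 0 < P.real s := ENNReal.toReal_pos hs (measure_ne_top P s)
  rw [setIntegral_sub_const hX]
  field_simp
  ring

variable [IsProbabilityMeasure P]

lemma setIntegral_compl_sub_integral_eq_setIntegral_integral_sub (hX : Integrable X P)
    {s : Set Ω} (hs : MeasurableSet s) :
    ∫ ω in sᶜ, (X ω - P[X]) ∂P = ∫ ω in s, (P[X] - X ω) ∂P := by
  have hsum : ∫ ω in s, (X ω - P[X]) ∂P + ∫ ω in sᶜ, (X ω - P[X]) ∂P = 0 := by
    rw [integral_add_compl hs (hX.sub' (integrable_const _)),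
      integral_sub hX (integrable_const _), integral_const, probReal_univ, one_smul, sub_self]
  rw [eq_neg_of_add_eq_zero_right hsum, ← integral_neg]
  simp only [neg_sub]

lemma integral_abs_sub_integral_eq_two_mul_setIntegral (hXm : Measurable X)
    (hX : Integrable X P) :
    ∫ ω, |X ω - P[X]| ∂P = 2 * ∫ ω in {ω | X ω < P[X]}, (P[X] - X ω) ∂P := by
  set A := {ω | X ω < P[X]}
  have hA : MeasurableSet A := measurableSet_lt hXm measurable_const
  rw [← integral_add_compl hA (hX.sub' (integrable_const _)).abs, two_mul]
  congr 1
  · refine setIntegral_congr_fun hA fun ω (hω : X ω < P[X]) => ?_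
    rw [abs_of_neg (sub_neg.mpr hω), neg_sub]
  · rw [← setIntegral_compl_sub_integral_eq_setIntegral_integral_sub hX hA]
    refine setIntegral_congr_fun hA.compl fun ω (hω : ¬ X ω < P[X]) => ?_
    exact abs_of_nonneg (sub_nonneg.mpr (not_lt.mp hω))

lemma variance_le_integral_abs_sub_integral (hXm : AEMeasurable X P) (hX : Integrable X P)
    (hdev : ∀ᵐ ω ∂P, |X ω - P[X]| ≤ 1) :
    variance X P ≤ ∫ ω, |X ω - P[X]| ∂P := by
  have hsq_le : ∀ᵐ ω ∂P, (X ω - P[X]) ^ 2 ≤ |X ω - P[X]| := by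
    filter_upwards [hdev] with ω hω
    rw [← sq_abs]
    nlinarith [abs_nonneg (X ω - P[X])]
  have habs := (hX.sub' (integrable_const P[X])).abs
  have hsq : Integrable (fun ω => (X ω - P[X]) ^ 2) P :=
    habs.mono' ((hXm.sub_const _).pow_const 2).aestronglyMeasurable <| by
      filter_upwards [hsq_le] with ω hω
      rwa [Real.norm_of_nonneg (sq_nonneg _)]
  rw [variance_eq_integral hXm]
  exact integral_mono_ae hsq habs hsq_le

lemma abs_sub_integral_le_one_of_forall_mem_Icc (hrange : ∀ ω, X ω ∈ Set.Icc (0 : ℝ) 1)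
    (ω : Ω) : |X ω - P[X]| ≤ 1 := by
  have hmean_nonneg : 0 ≤ P[X] := integral_nonneg fun ω => (hrange ω).1
  have hmean_le_one : P[X] ≤ 1 :=
    calc P[X] ≤ ∫ _, (1 : ℝ) ∂P :=
          integral_mono_of_nonneg (.of_forall fun ω => (hrange ω).1) (integrable_const 1)
            (.of_forall fun ω => (hrange ω).2)
      _ = 1 := by simp
  exact abs_sub_le_iff.2 ⟨by linarith [(hrange ω).2], by linarith [(hrange ω).1]⟩

end

/-- Let `X` be a random variable taking values in `[0,1]`, with mean `μ = E[X]` and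
variance `c = Var(X)`.  If `c > 0` then `0 < P(X < μ) < 1` and
`E[X | X ≥ μ] − E[X | X < μ] ≥ c/2`, where `E[X | A] = E[X·1_A]/P(A)`. -/
theorem conditional_mean_gap_of_positive_variance
    {Ω : Type} [MeasurableSpace Ω] (P : Measure Ω) [IsProbabilityMeasure P]
    (X : Ω → ℝ) (hX : Measurable X)
    (hrange : ∀ ω, X ω ∈ Set.Icc (0 : ℝ) 1)
    (hc : 0 < variance X P) :
    (0 < (P {ω | X ω < ∫ ω', X ω' ∂P}).toReal ∧
      (P {ω | X ω < ∫ ω', X ω' ∂P}).toReal < 1) ∧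
    variance X P / 2 ≤
      (∫ ω in {ω | ∫ ω', X ω' ∂P ≤ X ω}, X ω ∂P) /
          (P {ω | ∫ ω', X ω' ∂P ≤ X ω}).toReal -
        (∫ ω in {ω | X ω < ∫ ω', X ω' ∂P}, X ω ∂P) /
          (P {ω | X ω < ∫ ω', X ω' ∂P}).toReal := by
  have hint : Integrable X P := .of_bound hX.aestronglyMeasurable 1 <| .of_forall fun ω => by
    rw [Real.norm_of_nonneg (hrange ω).1]; exact (hrange ω).2
  set A := {ω | X ω < P[X]}
  have hA : MeasurableSet A := measurableSet_lt hX measurable_const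
  have hsplit := setIntegral_compl_sub_integral_eq_setIntegral_integral_sub hint hA
  set d := ∫ ω in A, (P[X] - X ω) ∂P
  have hd : variance X P / 2 ≤ d := by
    linarith [integral_abs_sub_integral_eq_two_mul_setIntegral hX hint,
      variance_le_integral_abs_sub_integral hX.aemeasurable hint
        (.of_forall (abs_sub_integral_le_one_of_forall_mem_Icc hrange))]
  have hd_pos : 0 < d := by linarith
  have hPA : P A ≠ 0 := fun h => hd_pos.ne' (setIntegral_measure_zero _ h)
  have hPAc : P Aᶜ ≠ 0 := fun h => hd_pos.ne' (hsplit.symm.trans (setIntegral_measure_zero _ h))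
  have hp_pos : 0 < P.real A := ENNReal.toReal_pos hPA (measure_ne_top P A)
  have hq_pos : 0 < P.real Aᶜ := ENNReal.toReal_pos hPAc (measure_ne_top P Aᶜ)
  have hp_lt_one : P.real A < 1 := by linarith [probReal_compl_eq_one_sub (μ := P) hA]
  have hA_sub : ∫ ω in A, (X ω - P[X]) ∂P = -d := by
    rw [← integral_neg]; simp only [neg_sub]
  refine ⟨⟨hp_pos, hp_lt_one⟩, ?_⟩
  have hAc : {ω | P[X] ≤ X ω} = Aᶜ := by ext; simp [A]
  simp only [hAc, ← measureReal_def]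
  rw [setIntegral_div_measureReal_eq_add hint hPAc P[X],
    setIntegral_div_measureReal_eq_add hint hPA P[X], hsplit, hA_sub, neg_div]
  linarith [le_div_self hd_pos.le hp_pos hp_lt_one.le, div_nonneg hd_pos.le hq_pos.le]
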